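/- For every prime p > 3 and every pair (A,B) ∈ 𝔽_p² with B(A² − 4) ≠ 0, the number of 𝔽_p-rational points of the Montgomery curve M_{A,B} (including the point at infinity) is divisible by 4. -/

import Mathlib

/-- The affine `𝔽_p`-points of the Montgomery curve `B * y ^ 2 = x ^ 3 + A * x ^ 2 + x`. -/
def montAffinePoints (p : ℕ) [Fact p.Prime] (A B : ZMod p) : Finset (ZMod p × ZMod p) :=
  Finset.univ.filter (fun q => B * q.2 ^ 2 = q.1 ^ 3 + A * q.1 ^ 2 + q.1)

/-- The number of `𝔽_p`-rational points of the Montgomery curve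
`M_{A,B} : B * y ^ 2 = x ^ 3 + A * x ^ 2 + x`, including the point at infinity. -/
def montCard (p : ℕ) [Fact p.Prime] (A B : ZMod p) : ℕ :=
  (montAffinePoints p A B).card + 1

/-- The set `S_M(p, t)` of pairs `(A, B) ∈ 𝔽_p²` with `B * (A ^ 2 - 4) ≠ 0` such that the
Montgomery curve `M_{A,B}` has exactly `p + 1 - t` points over `𝔽_p`. -/
def SM (p : ℕ) [Fact p.Prime] (t : ℤ) : Finset (ZMod p × ZMod p) :=
  Finset.univ.filter
    (fun q => q.2 * (q.1 ^ 2 - 4) ≠ 0 ∧ (montCard p q.1 q.2 : ℤ) = (p : ℤ) + 1 - t)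

/-!
Write `f x = x ^ 3 + A x ^ 2 + x` and `χ` for the quadratic character. Over `x` there are
`χ (B f x) + 1` points. Since `f (1 / x) = f x / x ^ 4`, the involution `x ↦ 1 / x` preserves
these fibre sizes; away from `x = 0, ±1` and the roots of `f` it pairs up fibres of size `0` or `2`,
which together contribute a multiple of `4`. The roots of `f` contribute `2 + χ (A ^ 2 - 4)` points
and `x = ±1` contribute `χ (B (A ± 2)) + 1`. As `χ (A ^ 2 - 4) = χ (B (A + 2)) χ (B (A - 2))`, the
total count including the point at infinity is `(1 + χ (B (A + 2))) (1 + χ (B (A - 2)))` modulo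
`4`, and both factors lie in `{0, 2}`.
-/

open Finset

lemma four_dvd_sum_of_involution {ι : Type*} {s : Finset ι} {g : ι → ℤ} (σ : ι → ι)
    (hmem : ∀ x ∈ s, σ x ∈ s) (hinv : ∀ x ∈ s, σ (σ x) = x) (hne : ∀ x ∈ s, σ x ≠ x)
    (hg : ∀ x ∈ s, g (σ x) = g x) (heven : ∀ x ∈ s, Even (g x)) :
    4 ∣ ∑ x ∈ s, g x := by
  refine (ZMod.intCast_zmod_eq_zero_iff_dvd _ 4).mp ?_
  push_cast
  refine sum_involution (fun x _ => σ x) (fun x hx => ?_) (fun x hx _ => hne x hx) hmem hinv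
  obtain ⟨k, hk⟩ := heven x hx
  rw [hg x hx, hk]
  push_cast
  linear_combination (k : ZMod 4) * (by decide : (4 : ZMod 4) = 0)

variable {F : Type*} [Field F]

def montCubic (A x : F) : F := x ^ 3 + A * x ^ 2 + x

lemma montCubic_inv (A x : F) : montCubic A x⁻¹ = montCubic A x * (x⁻¹ ^ 2) ^ 2 := by
  rcases eq_or_ne x 0 with rfl | hx
  · simp [montCubic]
  · simp only [montCubic]
    field_simp
    ring

lemma montCubic_eq_zero_iff {A x : F} :
    montCubic A x = 0 ↔ x = 0 ∨ 1 * (x * x) + A * x + 1 = 0 := by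
  rw [← mul_eq_zero, montCubic]
  ring_nf

variable [Fintype F] [DecidableEq F]

lemma card_filter_affine_sq_eq {a : F} (ha : a ≠ 0) (b d : F) :
    #{x : F | (a * x + b) ^ 2 = d} = #{z : F | z ^ 2 = d} :=
  card_nbij' (fun x => a * x + b) (fun z => a⁻¹ * (z - b)) (fun x hx => by simpa using hx)
    (fun z hz => by simpa [ha] using hz)
    (fun x _ => by field_simp; ring) (fun z _ => by field_simp; ring)

lemma card_filter_sq_eq (hF : ringChar F ≠ 2) (d : F) :
    (#{z : F | z ^ 2 = d} : ℤ) = quadraticChar F d + 1 := by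
  rw [← quadraticChar_card_sqrts hF, Set.toFinset_ofPred]

lemma card_filter_mul_sq_eq (hF : ringChar F ≠ 2) {B : F} (hB : B ≠ 0) (c : F) :
    (#{y : F | B * y ^ 2 = c} : ℤ) = quadraticChar F (B * c) + 1 := by
  have hequiv (y : F) : B * y ^ 2 = c ↔ (B * y + 0) ^ 2 = B * c := by
    rw [add_zero, mul_pow, sq B, mul_assoc, mul_right_inj' hB]
  simp_rw [hequiv, card_filter_affine_sq_eq hB, card_filter_sq_eq hF]

lemma card_filter_mul_sq_eq_sum (hF : ringChar F ≠ 2) {B : F} (hB : B ≠ 0) (g : F → F) :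
    (#{q : F × F | B * q.2 ^ 2 = g q.1} : ℤ) = ∑ x, (quadraticChar F (B * g x) + 1) := by
  rw [card_filter, Fintype.sum_prod_type]
  push_cast
  refine sum_congr rfl fun x _ => ?_
  rw [← card_filter_mul_sq_eq hF hB, card_filter]
  push_cast
  rfl

lemma card_quadratic_roots (hF : ringChar F ≠ 2) {a : F} (ha : a ≠ 0) (b c : F) :
    (#{x : F | a * (x * x) + b * x + c = 0} : ℤ) = quadraticChar F (discrim a b c) + 1 := by
  have : NeZero (2 : F) := ⟨Ring.two_ne_zero hF⟩
  simp_rw [quadratic_eq_zero_iff_discrim_eq_sq ha, eq_comm (a := discrim a b c),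
    card_filter_affine_sq_eq (mul_ne_zero two_ne_zero ha), card_filter_sq_eq hF]

lemma card_montCubic_eq_zero (hF : ringChar F ≠ 2) (A : F) :
    (#{x : F | montCubic A x = 0} : ℤ) = quadraticChar F (A ^ 2 - 4) + 2 := by
  have hroots := card_quadratic_roots hF one_ne_zero A 1
  have h0 : (0 : F) ∉ ({x | 1 * (x * x) + A * x + 1 = 0} : Finset F) := by simp
  simp_rw [montCubic_eq_zero_iff, filter_or, filter_eq', mem_univ, if_true, singleton_union,
    card_insert_of_notMem h0]
  rw [Nat.cast_succ, hroots, discrim]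
  ring_nf

lemma quadraticChar_montCubic_inv (A B x : F) :
    quadraticChar F (B * montCubic A x⁻¹) = quadraticChar F (B * montCubic A x) := by
  rcases eq_or_ne x 0 with rfl | hx
  · simp
  · rw [montCubic_inv, ← mul_assoc, map_mul, quadraticChar_sq_one' (by simpa using hx), mul_one]

lemma four_dvd_sum_quadraticChar_montCubic {A B : F} (hB : B ≠ 0) :
    4 ∣ ∑ x ∈ (({x : F | montCubic A x ≠ 0} : Finset F).erase 1).erase (-1),
      (quadraticChar F (B * montCubic A x) + 1) := by
  refine four_dvd_sum_of_involution (·⁻¹) (fun x hx => ?_) (fun x _ => inv_inv x)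
    (fun x hx => ?_) (fun x _ => by rw [quadraticChar_montCubic_inv]) (fun x hx => ?_)
  all_goals
    simp only [mem_erase, mem_filter, mem_univ, true_and] at hx ⊢
    obtain ⟨hxn, hxp, hfx⟩ := hx
    have hx0 : x ≠ 0 := by rintro rfl; simp [montCubic] at hfx
  · refine ⟨by simpa [inv_eq_iff_eq_inv] using hxn, by simpa using hxp, ?_⟩
    rw [montCubic_inv]
    exact mul_ne_zero hfx (by simpa using hx0)
  · simp [inv_eq_self₀, hxn, hxp, hx0]
  · rcases quadraticChar_dichotomy (mul_ne_zero hB hfx) with h | h <;> simp [h]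

lemma card_montgomery_affine_eq (hF : ringChar F ≠ 2) {A B : F} (hB : B ≠ 0) (hAp : A + 2 ≠ 0)
    (hAm : A - 2 ≠ 0) :
    (#{q : F × F | B * q.2 ^ 2 = montCubic A q.1} : ℤ) =
      quadraticChar F (A ^ 2 - 4) + quadraticChar F (B * (A + 2)) +
        quadraticChar F (B * (A - 2)) + 4 +
        ∑ x ∈ (({x : F | montCubic A x ≠ 0} : Finset F).erase 1).erase (-1),
          (quadraticChar F (B * montCubic A x) + 1) := by
  have h1 : montCubic A 1 = A + 2 := by rw [montCubic]; ring
  have hm1 : montCubic A (-1) = A - 2 := by rw [montCubic]; ring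
  have h1mem : (1 : F) ∈ ({x : F | montCubic A x ≠ 0} : Finset F) := by simp [h1, hAp]
  have hm1mem : (-1 : F) ∈ (({x : F | montCubic A x ≠ 0} : Finset F).erase 1) := by
    simp [hm1, hAm, Ring.neg_one_ne_one_of_char_ne_two hF]
  have hzero : ∑ x ∈ ({x : F | montCubic A x = 0} : Finset F),
      (quadraticChar F (B * montCubic A x) + 1) = #{x : F | montCubic A x = 0} := by
    rw [card_eq_sum_ones, Nat.cast_sum]
    refine sum_congr rfl fun x hx => ?_
    simp [(mem_filter.mp hx).2]
  rw [card_filter_mul_sq_eq_sum hF hB, ← sum_filter_add_sum_filter_not _ (montCubic A · = 0),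
    hzero, card_montCubic_eq_zero hF, ← add_sum_erase _ _ h1mem, ← add_sum_erase _ _ hm1mem,
    h1, hm1]
  ring

theorem four_dvd_card_montgomery_add_one (hF : ringChar F ≠ 2) {A B : F} (hB : B ≠ 0)
    (hA : A ^ 2 - 4 ≠ 0) : 4 ∣ #{q : F × F | B * q.2 ^ 2 = montCubic A q.1} + 1 := by
  obtain ⟨hAp, hAm⟩ : A + 2 ≠ 0 ∧ A - 2 ≠ 0 := mul_ne_zero_iff.mp (by convert hA using 1; ring)
  set χ := quadraticChar F
  have hdisc : χ (A ^ 2 - 4) = χ (B * (A + 2)) * χ (B * (A - 2)) := by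
    rw [← map_mul, show B * (A + 2) * (B * (A - 2)) = B ^ 2 * (A ^ 2 - 4) by ring, map_mul,
      quadraticChar_sq_one' hB, one_mul]
  have hends : 4 ∣ (χ (B * (A + 2)) + 1) * (χ (B * (A - 2)) + 1) := by
    rcases quadraticChar_dichotomy (mul_ne_zero hB hAp) with h₁ | h₁ <;>
    rcases quadraticChar_dichotomy (mul_ne_zero hB hAm) with h₂ | h₂ <;> simp [χ, h₁, h₂]
  have hcount : ((#{q : F × F | B * q.2 ^ 2 = montCubic A q.1} + 1 : ℕ) : ℤ) =
      (χ (B * (A + 2)) + 1) * (χ (B * (A - 2)) + 1) + 4 +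
        ∑ x ∈ (({x : F | montCubic A x ≠ 0} : Finset F).erase 1).erase (-1),
          (χ (B * montCubic A x) + 1) := by
    rw [Nat.cast_add, Nat.cast_one, card_montgomery_affine_eq hF hB hAp hAm, hdisc]
    ring
  rw [← Int.natCast_dvd_natCast, hcount]
  exact (hends.add (dvd_refl 4)).add (four_dvd_sum_quadraticChar_montCubic hB)

/-- For a prime `p > 3` and `(A, B) ∈ 𝔽_p²` with `B (A² - 4) ≠ 0`, the number of
`𝔽_p`-rational points of the Montgomery curve `M_{A,B}` (including the point at
infinity) is divisible by `4`. -/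
theorem four_dvd_montCard (p : ℕ) [Fact p.Prime] (hp3 : 3 < p) (A B : ZMod p)
    (h : B * (A ^ 2 - 4) ≠ 0) : 4 ∣ montCard p A B := by
  have hF : ringChar (ZMod p) ≠ 2 := by rw [ZMod.ringChar_zmod_n]; omega
  obtain ⟨hB, hA⟩ := mul_ne_zero_iff.mp h
  exact four_dvd_card_montgomery_add_one hF hB hA
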